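/- arXiv:2511.07557 — 3 statements merged into one kernel-verified Lean document; each statement's English description precedes it below -/
import Mathlib

section
/- Moran's formula for two affine contractions: if f_j(x) = a_j x + b_j (j = 1, 2) with 0 < |a_1|, |a_2| < 1 map [0,1] into disjoint subintervals of [0,1], then the equation |a_1|^s + |a_2|^s = 1 has a unique solution s ∈ (0, 1), and this s equals the Hausdorff dimension of the attractor K satisfying K = f_1(K) ∪ f_2(K). -/
/-!
Write `fᵢ x = cᵢ x + eᵢ`. Every point of `K` is `∑ₙ (∏_{k<n} c_{ωₖ}) e_{ωₙ}`, the limit of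
`f_{ω₀} ∘ ⋯ ∘ f_{ωₙ₋₁} (0)`, for some address `ω : ℕ → Fin 2`, and every address gives a
point of `K`.

Upper bound: the `2ⁿ` cylinders of level `n` cover `K` with diameters `∏_{k<n} |c_{ωₖ}| · diam K`,
and the sum over words of `∏_{k<n} |c_{ωₖ}|^s` is `(|a₁|^s + |a₂|^s)ⁿ = 1`, so
`μH[s] K ≤ (diam K)^s < ∞`.

Lower bound: with `pᵢ = |cᵢ|^s`, the same addresses code `[0,1]` for the maps `t ↦ p₀ t` and
`t ↦ p₀ + p₁ t`. Sending the point of `K` with address `ω` to the point of `[0,1]` with address `ω`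
is `s`-Hölder: if two addresses first differ at `n`, the points of `K` are at distance at least
`δ ∏_{k<n} |c_{ωₖ}|`, `δ` being the gap between `f₀ [0,1]` and `f₁ [0,1]`, while the points of
`[0,1]` are within `∏_{k<n} p_{ωₖ} = (∏_{k<n} |c_{ωₖ}|)^s`. Hence `1 = dimH [0,1] ≤ dimH K / s`.
-/

open Set Filter Topology MeasureTheory
open scoped NNReal ENNReal

theorem dimH_range_le_of_dist_le_mul_rpow {α X Y : Type*} [Nonempty α] [MetricSpace X]
    [MetricSpace Y] {f : α → X} {g : α → Y} {C : ℝ} {r : ℝ≥0} (hr : 0 < r)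
    (h : ∀ a b, dist (g a) (g b) ≤ C * dist (f a) (f b) ^ (r : ℝ)) :
    dimH (range g) ≤ dimH (range f) / r := by
  set φ := g ∘ Function.invFun f
  have hφ : ∀ a, φ (f a) = g a := fun a => dist_le_zero.1 <| (h _ _).trans_eq <| by
    rw [Function.invFun_eq (⟨a, rfl⟩ : ∃ b, f b = f a), dist_self,
      Real.zero_rpow (NNReal.coe_pos.2 hr).ne', mul_zero]
  have hrange : φ '' range f = range g := by
    rw [← range_comp]; exact congr_arg range (funext hφ)
  rw [← hrange]
  refine HolderOnWith.dimH_image_le (C := C.toNNReal) ?_ hr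
  rintro _ ⟨a, rfl⟩ _ ⟨b, rfl⟩
  rw [hφ, hφ, edist_dist, edist_dist, ENNReal.ofReal_rpow_of_nonneg dist_nonneg r.coe_nonneg,
    ← ENNReal.ofReal_coe_nnreal, ← ENNReal.ofReal_mul C.toNNReal.coe_nonneg]
  exact ENNReal.ofReal_le_ofReal ((h a b).trans
    (mul_le_mul_of_nonneg_right (Real.le_coe_toNNReal C) (by positivity)))

theorem abs_sub_add_abs_sub_lt_one_of_disjoint_uIcc {u₀ u₁ v₀ v₁ : ℝ}
    (hu₀ : u₀ ∈ Icc (0 : ℝ) 1) (hu₁ : u₁ ∈ Icc (0 : ℝ) 1) (hv₀ : v₀ ∈ Icc (0 : ℝ) 1)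
    (hv₁ : v₁ ∈ Icc (0 : ℝ) 1) (hdisj : Disjoint (uIcc u₀ u₁) (uIcc v₀ v₁)) :
    |u₁ - u₀| + |v₁ - v₀| < 1 := by
  by_contra! h
  rw [← max_sub_min_eq_abs, ← max_sub_min_eq_abs] at h
  have hu : 0 ≤ min u₀ u₁ ∧ max u₀ u₁ ≤ 1 := ⟨le_min hu₀.1 hu₁.1, max_le hu₀.2 hu₁.2⟩
  have hv : 0 ≤ min v₀ v₁ ∧ max v₀ v₁ ≤ 1 := ⟨le_min hv₀.1 hv₁.1, max_le hv₀.2 hv₁.2⟩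
  have hu' := min_le_max (a := u₀) (b := u₁)
  have hv' := min_le_max (a := v₀) (b := v₁)
  -- the larger of the two left endpoints lies in both intervals
  exact disjoint_left.1 hdisj
    (⟨le_max_left _ _, max_le hu' (by linarith)⟩ : max (min u₀ u₁) (min v₀ v₁) ∈ Icc _ _)
    ⟨le_max_right _ _, max_le (by linarith) hv'⟩

theorem existsUnique_rpow_add_rpow_eq_one {r₁ r₂ : ℝ} (h₁ : 0 < r₁) (h₂ : 0 < r₂)
    (h : r₁ + r₂ < 1) : ∃! s, s ∈ Ioo (0 : ℝ) 1 ∧ r₁ ^ s + r₂ ^ s = 1 := by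
  set g : ℝ → ℝ := fun s => r₁ ^ s + r₂ ^ s
  have hanti : StrictAnti g := fun s t hst =>
    add_lt_add (Real.rpow_lt_rpow_of_exponent_gt h₁ (by linarith) hst)
      (Real.rpow_lt_rpow_of_exponent_gt h₂ (by linarith) hst)
  have hcont : Continuous g := by fun_prop (disch := positivity)
  obtain ⟨s, hs, hgs⟩ := intermediate_value_Ioo' zero_le_one hcont.continuousOn
    (show (1 : ℝ) ∈ Ioo (g 1) (g 0) by simp [g]; linarith)
  exact ⟨s, ⟨hs, hgs⟩, fun t ht => hanti.injective (ht.2.trans hgs.symm)⟩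

theorem exists_forall_lt_eq_and_ne {ι : Type*} {ω ω' : ℕ → ι} (h : ω ≠ ω') :
    ∃ n, (∀ k < n, ω k = ω' k) ∧ ω n ≠ ω' n := by
  classical
  have hex := Function.ne_iff.1 h
  exact ⟨Nat.find hex, fun k hk => not_not.1 (Nat.find_min hex hk), Nat.find_spec hex⟩

namespace AffineIFS

section General

variable {ι : Type*}

theorem exists_forall_abs_le_lt_one [Fintype ι] {c : ι → ℝ} (hc : ∀ i, |c i| < 1) :
    ∃ M, 0 ≤ M ∧ M < 1 ∧ ∀ i, |c i| ≤ M := by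
  refine ⟨(Finset.univ.sup fun i => ‖c i‖₊ : ℝ≥0), NNReal.coe_nonneg _, ?_, fun i => ?_⟩
  · exact_mod_cast (Finset.sup_lt_iff one_pos).2 fun i _ => by
      rw [← NNReal.coe_lt_coe, coe_nnnorm, Real.norm_eq_abs]; exact hc i
  · rw [← Real.norm_eq_abs, ← coe_nnnorm]
    exact_mod_cast Finset.le_sup (f := fun i => ‖c i‖₊) (Finset.mem_univ i)

variable (c e : ι → ℝ)

/-- `wordMap c e ω n = f (ω 0) ∘ ⋯ ∘ f (ω (n - 1))` for the maps `f i x = c i * x + e i`. -/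
def wordMap (ω : ℕ → ι) : ℕ → ℝ → ℝ
  | 0 => id
  | n + 1 => wordMap ω n ∘ fun x => c (ω n) * x + e (ω n)

/-- The point with address `ω`; its partial sums are `wordMap c e ω n 0`. -/
noncomputable def coding (ω : ℕ → ι) : ℝ :=
  ∑' n, (∏ k ∈ Finset.range n, c (ω k)) * e (ω n)

variable {c e}

theorem wordMap_sub (ω : ℕ → ι) (n : ℕ) (x y : ℝ) :
    wordMap c e ω n x - wordMap c e ω n y = (∏ k ∈ Finset.range n, c (ω k)) * (x - y) := by
  induction n generalizing x y with
  | zero => simp [wordMap]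
  | succ n ih =>
    simp only [wordMap, Function.comp_apply, ih, Finset.prod_range_succ]
    ring

theorem wordMap_congr {ω ω' : ℕ → ι} {n : ℕ} (h : ∀ k < n, ω k = ω' k) :
    wordMap c e ω n = wordMap c e ω' n := by
  induction n with
  | zero => rfl
  | succ n ih =>
    simp only [wordMap, h n n.lt_succ_self, ih fun k hk => h k (hk.trans n.lt_succ_self)]

theorem wordMap_mapsTo {K : Set ℝ} (hK : ∀ i, MapsTo (fun x => c i * x + e i) K K)
    (ω : ℕ → ι) (n : ℕ) : MapsTo (wordMap c e ω n) K K := by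
  induction n with
  | zero => exact mapsTo_id K
  | succ n ih => exact ih.comp (hK (ω n))

theorem abs_prod_le_pow {M : ℝ} (hM : ∀ i, |c i| ≤ M) (ω : ℕ → ι) (n : ℕ) :
    |∏ k ∈ Finset.range n, c (ω k)| ≤ M ^ n := by
  rw [Finset.abs_prod]
  calc ∏ k ∈ Finset.range n, |c (ω k)| ≤ ∏ _k ∈ Finset.range n, M :=
        Finset.prod_le_prod (fun _ _ => abs_nonneg _) fun k _ => hM _
    _ = M ^ n := by simp

theorem abs_coding_term_le [Fintype ι] {M : ℝ} (hM : ∀ i, |c i| ≤ M) (ω : ℕ → ι) (n : ℕ) :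
    |(∏ k ∈ Finset.range n, c (ω k)) * e (ω n)| ≤ (∑ i, |e i|) * M ^ n := by
  rw [abs_mul, mul_comm]
  exact mul_le_mul (Finset.single_le_sum (fun i _ => abs_nonneg (e i)) (Finset.mem_univ _))
    (abs_prod_le_pow hM ω n) (abs_nonneg _) (Finset.sum_nonneg fun i _ => abs_nonneg (e i))

theorem sum_prod_abs_rpow_eq_one [Fintype ι] {s : ℝ} (hs : ∑ i, |c i| ^ s = 1) (n : ℕ) :
    ∑ w : Fin n → ι, (∏ k, |c (w k)|) ^ s = 1 := by
  simp only [← Real.finsetProd_rpow _ _ (fun _ _ => abs_nonneg _)]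
  rw [← Fintype.prod_sum (fun (_ : Fin n) i => |c i| ^ s), hs, Finset.prod_const_one]

variable [Fintype ι] (hc : ∀ i, |c i| < 1)
include hc

theorem summable_coding (ω : ℕ → ι) :
    Summable fun n => (∏ k ∈ Finset.range n, c (ω k)) * e (ω n) := by
  obtain ⟨M, hM0, hM1, hM⟩ := exists_forall_abs_le_lt_one hc
  exact .of_norm_bounded ((summable_geometric_of_lt_one hM0 hM1).mul_left _)
    (abs_coding_term_le hM ω)

theorem isBounded_range_coding : Bornology.IsBounded (range (coding c e)) := by
  obtain ⟨M, hM0, hM1, hM⟩ := exists_forall_abs_le_lt_one hc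
  refine (Metric.isBounded_iff_subset_closedBall 0).2 ⟨(∑ i, |e i|) * (1 - M)⁻¹, ?_⟩
  rintro _ ⟨ω, rfl⟩
  rw [mem_closedBall_zero_iff]
  exact tsum_of_norm_bounded ((hasSum_geometric_of_lt_one hM0 hM1).mul_left _)
    (abs_coding_term_le hM ω)

theorem coding_eq (ω : ℕ → ι) :
    coding c e ω = c (ω 0) * coding c e (fun k => ω (k + 1)) + e (ω 0) := by
  rw [coding, (summable_coding hc ω).tsum_eq_zero_add, coding, ← tsum_mul_left]
  simp only [Finset.prod_range_succ', Finset.prod_range_zero, one_mul, add_comm (e (ω 0))]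
  congr 1
  exact tsum_congr fun n => by ring

theorem coding_eq_wordMap (ω : ℕ → ι) (n : ℕ) :
    coding c e ω = wordMap c e ω n (coding c e fun k => ω (k + n)) := by
  induction n with
  | zero => rfl
  | succ n ih =>
    rw [ih, coding_eq hc (fun k => ω (k + n))]
    simp only [wordMap, Function.comp_apply, zero_add, add_right_comm _ 1 n, add_assoc]

theorem coding_sub_coding {ω ω' : ℕ → ι} {n : ℕ} (h : ∀ k < n, ω k = ω' k) :
    coding c e ω - coding c e ω' = (∏ k ∈ Finset.range n, c (ω k)) *
      (coding c e (fun k => ω (k + n)) - coding c e fun k => ω' (k + n)) := by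
  rw [coding_eq_wordMap hc ω n, coding_eq_wordMap hc ω' n, wordMap_congr h, ← wordMap_sub,
    wordMap_congr h]

theorem dist_coding_le {ω ω' : ℕ → ι} {n : ℕ} (h : ∀ k < n, ω k = ω' k) :
    dist (coding c e ω) (coding c e ω') ≤
      (∏ k ∈ Finset.range n, |c (ω k)|) * Metric.diam (range (coding c e)) := by
  rw [Real.dist_eq, coding_sub_coding hc h, abs_mul, Finset.abs_prod, ← Real.dist_eq]
  exact mul_le_mul_of_nonneg_left
    (Metric.dist_le_diam_of_mem (isBounded_range_coding hc) (mem_range_self _)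
      (mem_range_self _))
    (Finset.prod_nonneg fun _ _ => abs_nonneg _)

theorem tendsto_wordMap (ω : ℕ → ι) {y : ℕ → ℝ} (hy : Bornology.IsBounded (range y)) :
    Tendsto (fun n => wordMap c e ω n (y n)) atTop (𝓝 (coding c e ω)) := by
  obtain ⟨M, hM0, hM1, hM⟩ := exists_forall_abs_le_lt_one hc
  obtain ⟨C, hC⟩ := Metric.isBounded_iff.1 (hy.union (isBounded_range_coding (e := e) hc))
  rw [tendsto_iff_dist_tendsto_zero]
  refine squeeze_zero (fun _ => dist_nonneg) (fun n => ?_)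
    (by simpa using (tendsto_pow_atTop_nhds_zero_of_lt_one hM0 hM1).mul_const C)
  rw [coding_eq_wordMap hc ω n, Real.dist_eq, wordMap_sub, abs_mul]
  exact mul_le_mul (abs_prod_le_pow hM ω n)
    (hC (mem_union_left _ (mem_range_self n)) (mem_union_right _ (mem_range_self _)))
    (abs_nonneg _) (pow_nonneg hM0 n)

theorem range_coding_subset {K : Set ℝ} (hKc : IsClosed K) (hKne : K.Nonempty)
    (hK : ∀ i, MapsTo (fun x => c i * x + e i) K K) : range (coding c e) ⊆ K := by
  rintro _ ⟨ω, rfl⟩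
  obtain ⟨x, hx⟩ := hKne
  exact hKc.mem_of_tendsto (tendsto_wordMap hc ω (y := fun _ => x)
    (by rw [range_const]; exact Bornology.isBounded_singleton))
    (Eventually.of_forall fun n => wordMap_mapsTo hK ω n hx)

theorem subset_range_coding {K : Set ℝ} (hKb : Bornology.IsBounded K)
    (hK : ∀ x ∈ K, ∃ i, ∃ y ∈ K, x = c i * y + e i) : K ⊆ range (coding c e) := by
  intro x hx
  have : Nonempty ι := ⟨(hK x hx).choose⟩
  choose! β τ hτK hτ using hK
  have horbit : ∀ n, τ^[n] x ∈ K := by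
    intro n
    induction n with
    | zero => exact hx
    | succ n ih => rw [Function.iterate_succ_apply']; exact hτK _ ih
  set ω : ℕ → ι := fun n => β (τ^[n] x)
  have hx_eq : ∀ n, wordMap c e ω n (τ^[n] x) = x := by
    intro n
    induction n with
    | zero => rfl
    | succ n ih =>
      rw [wordMap, Function.comp_apply, Function.iterate_succ_apply', ← hτ _ (horbit n), ih]
  refine ⟨ω, tendsto_nhds_unique
    (tendsto_wordMap hc ω (hKb.subset (range_subset_iff.2 horbit))) ?_⟩
  simp only [hx_eq, tendsto_const_nhds]

theorem eq_range_coding {K : Set ℝ} (hKc : IsCompact K) (hKne : K.Nonempty)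
    (hK : K = ⋃ i, (fun x => c i * x + e i) '' K) : K = range (coding c e) := by
  refine (subset_range_coding hc hKc.isBounded fun x hx => ?_).antisymm
    (range_coding_subset hc hKc.isClosed hKne fun i => ?_)
  · rw [hK] at hx
    obtain ⟨i, y, hy, rfl⟩ := mem_iUnion.1 hx
    exact ⟨i, y, hy, rfl⟩
  · exact fun x hx => hK ▸ mem_iUnion.2 ⟨i, mem_image_of_mem _ hx⟩

theorem ediam_coding_image_cylinder_le (n : ℕ) (w : Fin n → ι) :
    Metric.ediam (coding c e '' {ω | ∀ k : Fin n, ω k = w k}) ≤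
      ENNReal.ofReal ((∏ k, |c (w k)|) * Metric.diam (range (coding c e))) := by
  refine Metric.ediam_le ?_
  rintro _ ⟨ω, hω, rfl⟩ _ ⟨ω', hω', rfl⟩
  have hagree : ∀ k < n, ω k = ω' k := fun k hk => (hω ⟨k, hk⟩).trans (hω' ⟨k, hk⟩).symm
  rw [edist_dist]
  refine ENNReal.ofReal_le_ofReal ((dist_coding_le hc hagree).trans_eq ?_)
  simp only [Finset.prod_range fun k => |c (ω k)|, show ∀ k : Fin n, ω k = w k from hω]

theorem hausdorffMeasure_range_coding_le {s : ℝ} (hs0 : 0 ≤ s) (hs : ∑ i, |c i| ^ s = 1) :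
    μH[s] (range (coding c e)) ≤ ENNReal.ofReal (Metric.diam (range (coding c e)) ^ s) := by
  obtain ⟨M, hM0, hM1, hM⟩ := exists_forall_abs_le_lt_one hc
  set D := Metric.diam (range (coding c e))
  have hD : 0 ≤ D := Metric.diam_nonneg
  set ρ : ∀ n, (Fin n → ι) → ℝ := fun n w => ∏ k, |c (w k)|
  have hρ0 : ∀ n w, 0 ≤ ρ n w := fun n w => Finset.prod_nonneg fun _ _ => abs_nonneg _
  have hρ_le : ∀ n w, ρ n w ≤ M ^ n := fun n w =>
    calc ρ n w ≤ ∏ _k : Fin n, M :=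
          Finset.prod_le_prod (fun k _ => abs_nonneg (c (w k))) fun k _ => hM (w k)
      _ = M ^ n := by simp
  have hmass : ∀ n, ∑ w, ENNReal.ofReal (ρ n w * D) ^ s = ENNReal.ofReal (D ^ s) := fun n => by
    simp_rw [ENNReal.ofReal_rpow_of_nonneg (mul_nonneg (hρ0 _ _) hD) hs0,
      Real.mul_rpow (hρ0 _ _) hD]
    rw [← ENNReal.ofReal_sum_of_nonneg fun w _ => by positivity, ← Finset.sum_mul,
      sum_prod_abs_rpow_eq_one hs, one_mul]
  have hr : Tendsto (fun n => ENNReal.ofReal (M ^ n * D)) atTop (𝓝 0) := by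
    simpa using ENNReal.tendsto_ofReal
      ((tendsto_pow_atTop_nhds_zero_of_lt_one hM0 hM1).mul_const D)
  calc μH[s] (range (coding c e))
      ≤ liminf (fun n => ∑ w : Fin n → ι,
          Metric.ediam (coding c e '' {ω | ∀ k : Fin n, ω k = w k}) ^ s) atTop :=
        Measure.hausdorffMeasure_le_liminf_sum s _ _ hr _
          (Eventually.of_forall fun n w => (ediam_coding_image_cylinder_le hc n w).trans
            (ENNReal.ofReal_le_ofReal (mul_le_mul_of_nonneg_right (hρ_le n w) hD)))
          (Eventually.of_forall fun n => by
            rintro _ ⟨ω, rfl⟩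
            exact mem_iUnion.2 ⟨fun k => ω k, ω, fun k => rfl, rfl⟩)
    _ ≤ ENNReal.ofReal (D ^ s) :=
        liminf_le_of_frequently_le (Frequently.of_forall fun n =>
          (Finset.sum_le_sum fun w _ => ENNReal.rpow_le_rpow
            (ediam_coding_image_cylinder_le hc n w) hs0).trans_eq (hmass n))

theorem dist_coding_le_rpow {c' e' : ι → ℝ} (hc' : ∀ i, |c' i| < 1) {s δ : ℝ} (hs : 0 < s)
    (hδ : 0 < δ) (hcc' : ∀ i, |c' i| = |c i| ^ s)
    (hsep : ∀ i j, i ≠ j → ∀ x ∈ range (coding c e), ∀ y ∈ range (coding c e),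
      δ ≤ dist (c i * x + e i) (c j * y + e j))
    (ω ω' : ℕ → ι) :
    dist (coding c' e' ω) (coding c' e' ω') ≤
      Metric.diam (range (coding c' e')) * δ ^ (-s) *
        dist (coding c e ω) (coding c e ω') ^ s := by
  rcases eq_or_ne ω ω' with rfl | hne
  · rw [dist_self]; positivity
  obtain ⟨n, hpre, hn⟩ := exists_forall_lt_eq_and_ne hne
  set ρ := ∏ k ∈ Finset.range n, |c (ω k)|
  have hρ0 : 0 ≤ ρ := Finset.prod_nonneg fun _ _ => abs_nonneg _
  have hgap : ρ * δ ≤ dist (coding c e ω) (coding c e ω') := by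
    rw [Real.dist_eq, coding_sub_coding hc hpre, abs_mul, Finset.abs_prod, ← Real.dist_eq,
      coding_eq hc (fun k => ω (k + n)), coding_eq hc (fun k => ω' (k + n))]
    refine mul_le_mul_of_nonneg_left ?_ hρ0
    simpa only [zero_add] using hsep _ _ hn _ (mem_range_self _) _ (mem_range_self _)
  calc dist (coding c' e' ω) (coding c' e' ω')
      ≤ (∏ k ∈ Finset.range n, |c' (ω k)|) * Metric.diam (range (coding c' e')) :=
        dist_coding_le hc' hpre
    _ = Metric.diam (range (coding c' e')) * ρ ^ s := by
        simp only [hcc', ρ, Real.finsetProd_rpow _ _ (fun _ _ => abs_nonneg _), mul_comm]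
    _ ≤ Metric.diam (range (coding c' e')) *
          (dist (coding c e ω) (coding c e ω') / δ) ^ s := by
        gcongr
        rwa [le_div_iff₀ hδ]
    _ = _ := by
        rw [Real.div_rpow dist_nonneg hδ.le, Real.rpow_neg hδ.le]
        ring

end General

section TwoMaps

theorem range_coding_eq_Icc {p : Fin 2 → ℝ} (hp0 : 0 < p 0) (hp1 : 0 < p 1)
    (hp : p 0 + p 1 = 1) : range (coding p ![0, p 0]) = Icc 0 1 := by
  have hc : ∀ i, |p i| < 1 := Fin.forall_fin_two.2
    ⟨by rw [abs_of_pos hp0]; linarith, by rw [abs_of_pos hp1]; linarith⟩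
  refine (range_coding_subset hc isClosed_Icc (nonempty_Icc.2 zero_le_one) ?_).antisymm
    (subset_range_coding hc (Metric.isBounded_Icc 0 1) ?_)
  · refine Fin.forall_fin_two.2 ⟨fun x hx => ?_, fun x hx => ?_⟩ <;>
      simp only [mem_Icc, Matrix.cons_val_zero, Matrix.cons_val_one] at hx ⊢ <;>
      constructor <;> nlinarith
  · intro x ⟨hx0, hx1⟩
    rcases le_total x (p 0) with h | h
    · refine ⟨0, x / p 0, ⟨by positivity, (div_le_one hp0).2 h⟩, ?_⟩
      simp [mul_div_cancel₀ _ hp0.ne']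
    · refine ⟨1, (x - p 0) / p 1, ⟨div_nonneg (by linarith) hp1.le,
        (div_le_one hp1).2 (by linarith)⟩, ?_⟩
      simp [mul_div_cancel₀ _ hp1.ne']

variable {c e : Fin 2 → ℝ} (hmaps : ∀ i, MapsTo (fun x => c i * x + e i) (Icc 0 1) (Icc 0 1))
  (hdisj : Disjoint ((fun x => c 0 * x + e 0) '' Icc 0 1) ((fun x => c 1 * x + e 1) '' Icc 0 1))
include hmaps hdisj

theorem abs_add_abs_lt_one_of_disjoint : |c 0| + |c 1| < 1 := by
  have hseg : ∀ i, uIcc (e i) (c i + e i) ⊆ (fun x => c i * x + e i) '' Icc 0 1 := fun i => by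
    simpa using intermediate_value_uIcc (a := (0 : ℝ)) (b := 1)
      (f := fun x => c i * x + e i) (by fun_prop)
  have h0 : ∀ i, e i ∈ Icc (0 : ℝ) 1 := fun i => by
    simpa using hmaps i (left_mem_Icc.2 zero_le_one)
  have h1 : ∀ i, c i + e i ∈ Icc (0 : ℝ) 1 := fun i => by
    simpa using hmaps i (right_mem_Icc.2 zero_le_one)
  simpa using abs_sub_add_abs_sub_lt_one_of_disjoint_uIcc (h0 0) (h1 0) (h0 1) (h1 1)
    (hdisj.mono (hseg 0) (hseg 1))

variable (hc0 : ∀ i, c i ≠ 0) (hc : ∀ i, |c i| < 1) {s : ℝ} (hs : 0 < s)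
  (hsum : |c 0| ^ s + |c 1| ^ s = 1)
include hc0 hc hs hsum

theorem le_dimH_range_coding : ENNReal.ofReal s ≤ dimH (range (coding c e)) := by
  set p : Fin 2 → ℝ := fun i => |c i| ^ s
  have hp0 : ∀ i, 0 < p i := fun i => Real.rpow_pos_of_pos (abs_pos.2 (hc0 i)) s
  have hp : ∀ i, |p i| < 1 := fun i => by
    rw [abs_of_pos (hp0 i)]; exact Real.rpow_lt_one (abs_nonneg _) (hc i) hs
  have hI : range (coding c e) ⊆ Icc 0 1 :=
    range_coding_subset hc isClosed_Icc (nonempty_Icc.2 zero_le_one) hmaps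
  obtain ⟨δ, hδ, hgap⟩ := Metric.exists_pos_forall_lt_edist
    (isCompact_Icc.image (by fun_prop)) (isCompact_Icc.image (by fun_prop)).isClosed hdisj
  have hgap' : ∀ x ∈ Icc 0 1, ∀ y ∈ Icc 0 1,
      (δ : ℝ) ≤ dist (c 0 * x + e 0) (c 1 * y + e 1) := fun x hx y hy => by
    have := hgap _ (mem_image_of_mem _ hx) _ (mem_image_of_mem _ hy)
    rw [edist_dist, ← ENNReal.ofReal_coe_nnreal,
      ENNReal.ofReal_lt_ofReal_iff_of_nonneg δ.coe_nonneg] at this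
    exact this.le
  have hsep : ∀ i j, i ≠ j → ∀ x ∈ range (coding c e), ∀ y ∈ range (coding c e),
      (δ : ℝ) ≤ dist (c i * x + e i) (c j * y + e j) := by
    intro i j hij x hx y hy
    fin_cases i <;> fin_cases j
    · exact absurd rfl hij
    · exact hgap' x (hI hx) y (hI hy)
    · rw [dist_comm]; exact hgap' y (hI hy) x (hI hx)
    · exact absurd rfl hij
  have hholder := dist_coding_le_rpow hc (e' := ![0, p 0]) hp hs (NNReal.coe_pos.2 hδ)
    (fun i => abs_of_pos (hp0 i)) hsep
  have hdim := dimH_range_le_of_dist_le_mul_rpow (r := s.toNNReal) (Real.toNNReal_pos.2 hs)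
    fun ω ω' => (Real.coe_toNNReal s hs.le).symm ▸ hholder ω ω'
  have hIcc : dimH (Icc (0 : ℝ) 1) = 1 := by
    rw [Real.dimH_of_nonempty_interior (by rw [interior_Icc]; exact nonempty_Ioo.2 zero_lt_one)]
    simp
  rwa [range_coding_eq_Icc (hp0 0) (hp0 1) hsum, hIcc, ENNReal.le_div_iff_mul_le
    (Or.inl (by simpa using hs)) (Or.inl ENNReal.coe_ne_top), one_mul] at hdim

theorem dimH_range_coding_eq : dimH (range (coding c e)) = ENNReal.ofReal s := by
  refine le_antisymm (dimH_le_of_hausdorffMeasure_ne_top ?_)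
    (le_dimH_range_coding hmaps hdisj hc0 hc hs hsum)
  rw [Real.coe_toNNReal s hs.le]
  exact ne_top_of_le_ne_top ENNReal.ofReal_ne_top
    (hausdorffMeasure_range_coding_le hc hs.le (by rwa [Fin.sum_univ_two]))

end TwoMaps

end AffineIFS

open AffineIFS

/-- Moran's formula for two affine contractions of `[0,1]` with disjoint images:
`|a₁|^s + |a₂|^s = 1` has a unique solution `s ∈ (0,1)`, which equals the Hausdorff
dimension of the attractor `K = f₁(K) ∪ f₂(K)`. -/
theorem moran_two_affine (a₁ b₁ a₂ b₂ : ℝ)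
    (ha₁ : 0 < |a₁|) (ha₁' : |a₁| < 1) (ha₂ : 0 < |a₂|) (ha₂' : |a₂| < 1)
    (f₁ f₂ : ℝ → ℝ) (hf₁ : ∀ x, f₁ x = a₁ * x + b₁) (hf₂ : ∀ x, f₂ x = a₂ * x + b₂)
    (hmaps₁ : MapsTo f₁ (Icc (0:ℝ) 1) (Icc (0:ℝ) 1))
    (hmaps₂ : MapsTo f₂ (Icc (0:ℝ) 1) (Icc (0:ℝ) 1))
    (hdisj : Disjoint (f₁ '' Icc (0:ℝ) 1) (f₂ '' Icc (0:ℝ) 1))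
    (K : Set ℝ) (hK : K.Nonempty) (hKc : IsCompact K)
    (hKattr : K = f₁ '' K ∪ f₂ '' K) :
    (∃! s : ℝ, s ∈ Ioo (0:ℝ) 1 ∧ |a₁| ^ s + |a₂| ^ s = 1) ∧
      ∀ s : ℝ, s ∈ Ioo (0:ℝ) 1 → |a₁| ^ s + |a₂| ^ s = 1 →
        dimH K = ENNReal.ofReal s := by
  obtain rfl : f₁ = fun x => a₁ * x + b₁ := funext hf₁
  obtain rfl : f₂ = fun x => a₂ * x + b₂ := funext hf₂
  set c : Fin 2 → ℝ := ![a₁, a₂]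
  set e : Fin 2 → ℝ := ![b₁, b₂]
  have hc0 : ∀ i, c i ≠ 0 := Fin.forall_fin_two.2 ⟨abs_pos.1 ha₁, abs_pos.1 ha₂⟩
  have hc : ∀ i, |c i| < 1 := Fin.forall_fin_two.2 ⟨ha₁', ha₂'⟩
  have hmaps : ∀ i, MapsTo (fun x => c i * x + e i) (Icc 0 1) (Icc 0 1) :=
    Fin.forall_fin_two.2 ⟨hmaps₁, hmaps₂⟩
  have hcoding : K = range (coding c e) := eq_range_coding hc hKc hK
    (hKattr.trans (Set.ext fun x => by simp [c, e, Fin.exists_fin_two]))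
  refine ⟨existsUnique_rpow_add_rpow_eq_one ha₁ ha₂
    (abs_add_abs_lt_one_of_disjoint hmaps hdisj), fun s hs hsum => ?_⟩
  rw [hcoding]
  exact dimH_range_coding_eq hmaps hdisj hc0 hc hs.1 hsum
end

section
/- Continuity of the root map: under the same hypotheses on P_1,…,P_k (uniform decreasing slope at least log λ > 0, zeros in [0,1]), the map Root : Δ → [0,1], sending α to the unique zero of ∑_j α_j P_j, is continuous; in fact |Root(α) − Root(β)| ≤ (M/log λ)·∑_j |α_j − β_j| where M = max_j max_{s∈[0,1]} |P_j(s)|. -/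
open Real Set

/-!
If `tα ≤ tβ`, the uniform slope bound makes `∑ α_j P_j` drop by at least `(tβ - tα) log λ`
between its zero `tα` and `tβ`, while `∑ α_j P_j tβ = ∑ (α_j - β_j) P_j tβ` has absolute value
at most `M ∑ |α_j - β_j|` because `tβ` is a zero of `∑ β_j P_j`.
-/

section SlopeBound

variable {ι : Type*} [Fintype ι]

lemma le_sub_mul_of_slope_le {f : ℝ → ℝ} {c : ℝ}
    (hslope : ∀ s r : ℝ, 0 ≤ s → 0 < r → s + r ≤ 1 → f (s + r) ≤ f s - r * c)
    {s t : ℝ} (hs : 0 ≤ s) (hst : s ≤ t) (ht : t ≤ 1) :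
    f t ≤ f s - (t - s) * c := by
  rcases hst.lt_or_eq with hlt | rfl
  · simpa using hslope s (t - s) hs (sub_pos.mpr hlt) (by linarith)
  · simp

lemma sum_mul_le_sub_mul_of_slope_le {P : ι → ℝ → ℝ} {c : ℝ}
    (hslope : ∀ j, ∀ s r : ℝ, 0 ≤ s → 0 < r → s + r ≤ 1 → P j (s + r) ≤ P j s - r * c)
    {α : ι → ℝ} (hα : ∀ j, 0 ≤ α j) (hαsum : ∑ j, α j = 1)
    {s t : ℝ} (hs : 0 ≤ s) (hst : s ≤ t) (ht : t ≤ 1) :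
    ∑ j, α j * P j t ≤ ∑ j, α j * P j s - (t - s) * c :=
  calc ∑ j, α j * P j t ≤ ∑ j, α j * (P j s - (t - s) * c) :=
        Finset.sum_le_sum fun j _ =>
          mul_le_mul_of_nonneg_left (le_sub_mul_of_slope_le (hslope j) hs hst ht) (hα j)
    _ = ∑ j, α j * P j s - (∑ j, α j) * ((t - s) * c) := by
        simp only [mul_sub, Finset.sum_sub_distrib, Finset.sum_mul]
    _ = ∑ j, α j * P j s - (t - s) * c := by rw [hαsum, one_mul]

lemma sum_sub_mul_le_mul_sum_abs {x : ι → ℝ} {M : ℝ} (hx : ∀ j, |x j| ≤ M) (α β : ι → ℝ) :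
    ∑ j, (β j - α j) * x j ≤ M * ∑ j, |α j - β j| := by
  rw [Finset.mul_sum]
  refine Finset.sum_le_sum fun j _ => ?_
  calc (β j - α j) * x j ≤ |β j - α j| * |x j| := by rw [← abs_mul]; exact le_abs_self _
    _ ≤ |α j - β j| * M := by rw [abs_sub_comm]; gcongr; exact hx j
    _ = M * |α j - β j| := mul_comm _ _

lemma sub_mul_le_of_sum_mul_eq_zero_of_le {P : ι → ℝ → ℝ} {c M : ℝ}
    (hslope : ∀ j, ∀ s r : ℝ, 0 ≤ s → 0 < r → s + r ≤ 1 → P j (s + r) ≤ P j s - r * c)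
    (hM : ∀ j, ∀ s ∈ Icc (0:ℝ) 1, |P j s| ≤ M)
    {α β : ι → ℝ} (hα : ∀ j, 0 ≤ α j) (hαsum : ∑ j, α j = 1)
    {tα tβ : ℝ} (htα : tα ∈ Icc (0:ℝ) 1) (htβ : tβ ∈ Icc (0:ℝ) 1)
    (hrootα : ∑ j, α j * P j tα = 0) (hrootβ : ∑ j, β j * P j tβ = 0) (hle : tα ≤ tβ) :
    (tβ - tα) * c ≤ M * ∑ j, |α j - β j| := by
  have hdrop := sum_mul_le_sub_mul_of_slope_le hslope hα hαsum htα.1 hle htβ.2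
  have hdiff : ∑ j, (β j - α j) * P j tβ = -∑ j, α j * P j tβ := by
    simp only [sub_mul, Finset.sum_sub_distrib, hrootβ, zero_sub]
  have hbound := sum_sub_mul_le_mul_sum_abs (fun j => hM j tβ htβ) α β
  linarith

end SlopeBound

theorem root_map_lipschitz_general {ι : Type*} [Fintype ι]
    (P : ι → ℝ → ℝ) (lam M : ℝ) (hlam : 1 < lam)
    (hslope : ∀ j, ∀ s r : ℝ, 0 ≤ s → 0 < r → s + r ≤ 1 →
      P j (s + r) ≤ P j s - r * Real.log lam)
    (hM : ∀ j, ∀ s ∈ Icc (0:ℝ) 1, |P j s| ≤ M)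
    (α β : ι → ℝ) (hα : ∀ j, 0 ≤ α j) (hαsum : ∑ j : ι, α j = 1)
    (hβ : ∀ j, 0 ≤ β j) (hβsum : ∑ j : ι, β j = 1)
    (tα tβ : ℝ) (htα : tα ∈ Icc (0:ℝ) 1) (htβ : tβ ∈ Icc (0:ℝ) 1)
    (hrootα : ∑ j : ι, α j * P j tα = 0) (hrootβ : ∑ j : ι, β j * P j tβ = 0) :
    |tα - tβ| ≤ (M / Real.log lam) * ∑ j : ι, |α j - β j| := by
  rw [div_mul_eq_mul_div, le_div_iff₀ (Real.log_pos hlam)]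
  rcases le_total tα tβ with hle | hle
  · rw [abs_sub_comm, abs_of_nonneg (sub_nonneg.mpr hle)]
    exact sub_mul_le_of_sum_mul_eq_zero_of_le hslope hM hα hαsum htα htβ hrootα hrootβ hle
  · rw [abs_of_nonneg (sub_nonneg.mpr hle)]
    simpa only [abs_sub_comm (β _)] using
      sub_mul_le_of_sum_mul_eq_zero_of_le hslope hM hβ hβsum htβ htα hrootβ hrootα hle

/-- Lipschitz continuity of the root map on the simplex: if `tα` and `tβ` are the
zeros of `∑ α_j P_j` and `∑ β_j P_j` respectively, then
`|tα − tβ| ≤ (M / log λ) · ∑_j |α_j − β_j|`, where `M` bounds all `|P_j|` on `[0,1]`.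
In particular the root map `Root : Δ → [0,1]` is continuous. -/
theorem root_map_lipschitz {ι : Type*} [Fintype ι] [Nonempty ι]
    (P : ι → ℝ → ℝ) (lam M : ℝ) (hlam : 1 < lam)
    (hcont : ∀ j, ContinuousOn (P j) (Icc (0:ℝ) 1))
    (hslope : ∀ j, ∀ s r : ℝ, 0 ≤ s → 0 < r → s + r ≤ 1 →
      P j (s + r) ≤ P j s - r * Real.log lam)
    (hzeros : ∀ j, ∃ s ∈ Icc (0:ℝ) 1, P j s = 0)
    (hM : ∀ j, ∀ s ∈ Icc (0:ℝ) 1, |P j s| ≤ M)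
    (α β : ι → ℝ) (hα : ∀ j, 0 ≤ α j) (hαsum : ∑ j : ι, α j = 1)
    (hβ : ∀ j, 0 ≤ β j) (hβsum : ∑ j : ι, β j = 1)
    (tα tβ : ℝ) (htα : tα ∈ Icc (0:ℝ) 1) (htβ : tβ ∈ Icc (0:ℝ) 1)
    (hrootα : ∑ j : ι, α j * P j tα = 0) (hrootβ : ∑ j : ι, β j * P j tβ = 0) :
    |tα - tβ| ≤ (M / Real.log lam) * ∑ j : ι, |α j - β j| :=
  root_map_lipschitz_general P lam M hlam hslope hM α β hα hαsum hβ hβsum tα tβ htα htβ hrootα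
    hrootβ
end

section
/- Under quasi-additivity with constant C (|a_{p+q} − a_p − a_q| ≤ C for all p,q), if a finite word decomposes into κ+1 maximal blocks of sizes l_1,…,l_{κ+1}, then the word sum differs from the sum of the block sums by at most κ·C; consequently, writing a_n for the log-partition value of the word c_1…c_n of a rarely switching sequence (κ_n = o(n)) over k symbols, one has (1/n)·|a_n − ∑_{j=1}^k n_j P_j| → 0, where n_j is the number of occurrences of symbol j in c_1…c_n and P_j is the limiting per-symbol value for constant words in symbol j. -/
open Filter Finset

/-!
Cut the word `c 0 ⋯ c (n - 1)` into its `κ + 1` maximal constant runs. Splitting a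
concatenation costs at most `C` per cut, and each run `j^l` has value `l P_j` up to `C`, so
`|a_n - ∑ j, n_j P_j| ≤ (2κ + 1) C`, which is `o(n)` when switches are rare.
-/

theorem List.ofFn_comp_val_eq_map_range {α : Type*} (c : ℕ → α) (n : ℕ) :
    List.ofFn (fun i : Fin n => c i) = (List.range n).map c :=
  List.ext_getElem (by simp) (by simp)

theorem Finset.sum_comp_eq_sum_card_mul {ι α R : Type*} [DecidableEq α] [Fintype α]
    [NonAssocSemiring R] (s : Finset ι) (c : ι → α) (P : α → R) :
    ∑ m ∈ s, P (c m) = ∑ j, (#{m ∈ s | c m = j} : R) * P j := by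
  rw [← sum_fiberwise s c]
  refine sum_congr rfl fun j _ => ?_
  rw [sum_congr rfl fun m hm => congrArg P (mem_filter.1 hm).2, sum_const, nsmul_eq_mul]

section QuasiAdditive

variable {α : Type*} {a : List α → ℝ} {C : ℝ}

theorem abs_apply_flatten_sub_sum_le
    (hqa : ∀ u v : List α, u ≠ [] → v ≠ [] → |a (u ++ v) - (a u + a v)| ≤ C) :
    ∀ bs : List (List α), bs ≠ [] → (∀ b ∈ bs, b ≠ []) →
      |a bs.flatten - (bs.map a).sum| ≤ ((bs.length - 1 : ℕ) : ℝ) * C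
  | [], hne, _ => absurd rfl hne
  | [b], _, _ => by simp
  | b :: b' :: bs, _, hbs => by
    have hrest := abs_apply_flatten_sub_sum_le hqa (b' :: bs) (List.cons_ne_nil _ _)
      fun x hx => hbs x (List.mem_cons_of_mem _ hx)
    have hflat : (b' :: bs).flatten ≠ [] :=
      List.append_ne_nil_of_left_ne_nil (hbs b' (by simp)) _
    have hsplit := hqa b _ (hbs b List.mem_cons_self) hflat
    calc |a (b :: b' :: bs).flatten - ((b :: b' :: bs).map a).sum|
        = |(a (b ++ (b' :: bs).flatten) - (a b + a (b' :: bs).flatten))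
            + (a (b' :: bs).flatten - ((b' :: bs).map a).sum)| := by
          simp only [List.flatten_cons, List.map_cons, List.sum_cons]; ring_nf
      _ ≤ C + ((bs.length : ℕ) : ℝ) * C := (abs_add_le _ _).trans (add_le_add hsplit hrest)
      _ = (((b :: b' :: bs).length - 1 : ℕ) : ℝ) * C := by simp; ring

variable [DecidableEq α]

def switchCount (c : ℕ → α) (n : ℕ) : ℕ := #{m ∈ range n | c m ≠ c (m + 1)}

theorem switchCount_succ (c : ℕ → α) (n : ℕ) :
    switchCount c (n + 1) = switchCount c n + if c n ≠ c (n + 1) then 1 else 0 := by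
  simp only [switchCount, card_filter, sum_range_succ]

theorem switchCount_mono (c : ℕ → α) : Monotone (switchCount c) := fun _ _ h =>
  card_le_card (filter_subset_filter _ (range_subset_range.mpr h))

variable {P : α → ℝ}

/- The last run is kept open (`l` further copies of `c n`); each switch costs `2C`: one for
splitting off the completed run, one for comparing that run with `l P_j`. -/
theorem abs_apply_range_append_replicate_sub_le
    (hqa : ∀ u v : List α, u ≠ [] → v ≠ [] → |a (u ++ v) - (a u + a v)| ≤ C)
    (hP : ∀ (j : α) (l : ℕ), 0 < l → |a (List.replicate l j) - l * P j| ≤ C)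
    (c : ℕ → α) :
    ∀ n l, 0 < l → |a ((List.range n).map c ++ List.replicate l (c n))
      - (∑ m ∈ range n, P (c m) + l * P (c n))| ≤ (2 * switchCount c n + 1) * C
  | 0, l, hl => by simpa [switchCount] using hP (c 0) l hl
  | n + 1, l, hl => by
    have hword : (List.range (n + 1)).map c = (List.range n).map c ++ List.replicate 1 (c n) := by
      simp [List.range_succ]
    rw [hword, sum_range_succ, switchCount_succ]
    by_cases hsw : c n = c (n + 1)
    · have hrun := abs_apply_range_append_replicate_sub_le hqa hP c n (1 + l) (by omega)
      rw [List.replicate_add, ← List.append_assoc] at hrun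
      simp only [← hsw, ne_eq, not_true_eq_false, if_false, add_zero]
      convert hrun using 3
      push_cast; ring
    · have hpre := abs_apply_range_append_replicate_sub_le hqa hP c n 1 one_pos
      set u := (List.range n).map c ++ List.replicate 1 (c n)
      set v := List.replicate l (c (n + 1))
      have hrun : |a v - l * P (c (n + 1))| ≤ C := hP (c (n + 1)) l hl
      have hsplit := hqa u v (by simp [u]) (by simpa [v] using hl.ne')
      simp only [hsw, ne_eq, not_false_eq_true, if_true]
      calc _ = |(a (u ++ v) - (a u + a v))
            + (a u - (∑ m ∈ range n, P (c m) + ((1 : ℕ) : ℝ) * P (c n)))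
            + (a v - l * P (c (n + 1)))| := by
            congr 1; push_cast; ring
        _ ≤ C + (2 * switchCount c n + 1) * C + C :=
          (abs_add_three _ _ _).trans (add_le_add (add_le_add hsplit hpre) hrun)
        _ = _ := by push_cast; ring

theorem abs_apply_range_sub_sum_le
    (hqa : ∀ u v : List α, u ≠ [] → v ≠ [] → |a (u ++ v) - (a u + a v)| ≤ C)
    (hP : ∀ (j : α) (l : ℕ), 0 < l → |a (List.replicate l j) - l * P j| ≤ C)
    (c : ℕ → α) (n : ℕ) :
    |a ((List.range (n + 1)).map c) - ∑ m ∈ range (n + 1), P (c m)|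
      ≤ (2 * switchCount c n + 1) * C := by
  have h := abs_apply_range_append_replicate_sub_le hqa hP c n 1 one_pos
  rw [List.range_succ, List.map_append, sum_range_succ]
  simpa using h

end QuasiAdditive

theorem quasi_additive_rare_switching_general {k : ℕ}
    (a : List (Fin k) → ℝ) (C : ℝ) (hC : 0 ≤ C)
    (hqa : ∀ u v : List (Fin k), u ≠ [] → v ≠ [] → |a (u ++ v) - (a u + a v)| ≤ C)
    (P : Fin k → ℝ)
    (hP : ∀ (j : Fin k) (l : ℕ), 0 < l → |a (List.replicate l j) - l * P j| ≤ C)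
    (c : ℕ → Fin k) (κ : ℕ → ℕ)
    (hκdef : ∀ n, κ n = ((Finset.range n).filter (fun m => c m ≠ c (m + 1))).card)
    (hκ : Tendsto (fun n : ℕ => (κ n : ℝ) / n) atTop (nhds 0)) :
    (∀ bs : List (List (Fin k)), bs ≠ [] → (∀ b ∈ bs, b ≠ []) →
        |a bs.flatten - (bs.map a).sum| ≤ ((bs.length - 1 : ℕ) : ℝ) * C) ∧
      Tendsto
        (fun n : ℕ => (1 / (n : ℝ)) *
          |a (List.ofFn (fun i : Fin n => c i)) -
            ∑ j : Fin k, (((Finset.range n).filter (fun m => c m = j)).card : ℝ) * P j|)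
        atTop (nhds 0) := by
  refine ⟨abs_apply_flatten_sub_sum_le hqa, ?_⟩
  have hlim : Tendsto (fun n : ℕ => 2 * C * ((κ n : ℝ) / n) + C * (1 / n)) atTop (nhds 0) := by
    simpa using (hκ.const_mul (2 * C)).add (tendsto_one_div_atTop_nhds_zero_nat.const_mul C)
  refine squeeze_zero' (Eventually.of_forall fun n => by positivity) ?_ hlim
  filter_upwards [eventually_gt_atTop 0] with n hn
  obtain ⟨n, rfl⟩ := Nat.exists_eq_succ_of_ne_zero hn.ne'
  have hword := abs_apply_range_sub_sum_le hqa hP c n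
  rw [← List.ofFn_comp_val_eq_map_range, sum_comp_eq_sum_card_mul] at hword
  have hswitch : (switchCount c n : ℝ) ≤ κ (n + 1) := by
    rw [hκdef]; exact_mod_cast switchCount_mono c n.le_succ
  calc _ ≤ (1 / ((n + 1 : ℕ) : ℝ)) * ((2 * κ (n + 1) + 1) * C) := by
        gcongr; exact hword.trans (by gcongr)
    _ = _ := by field_simp

/-- Quasi-additivity over blocks: a word sum differs from the sum over its `κ+1`
blocks by at most `κ·C`; consequently, for a rarely switching sequence,
`(1/n)|a_n − ∑_j n_j P_j| → 0`. -/
theorem quasi_additive_rare_switching {k : ℕ} (hk : 0 < k)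
    (a : List (Fin k) → ℝ) (C : ℝ) (hC : 0 ≤ C)
    (hqa : ∀ u v : List (Fin k), u ≠ [] → v ≠ [] → |a (u ++ v) - (a u + a v)| ≤ C)
    (P : Fin k → ℝ)
    (hP : ∀ (j : Fin k) (l : ℕ), 0 < l → |a (List.replicate l j) - l * P j| ≤ C)
    (c : ℕ → Fin k) (κ : ℕ → ℕ)
    (hκdef : ∀ n, κ n = ((Finset.range n).filter (fun m => c m ≠ c (m + 1))).card)
    (hκ : Tendsto (fun n : ℕ => (κ n : ℝ) / n) atTop (nhds 0)) :
    (∀ bs : List (List (Fin k)), bs ≠ [] → (∀ b ∈ bs, b ≠ []) →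
        |a bs.flatten - (bs.map a).sum| ≤ ((bs.length - 1 : ℕ) : ℝ) * C) ∧
      Tendsto
        (fun n : ℕ => (1 / (n : ℝ)) *
          |a (List.ofFn (fun i : Fin n => c i)) -
            ∑ j : Fin k, (((Finset.range n).filter (fun m => c m = j)).card : ℝ) * P j|)
        atTop (nhds 0) :=
  quasi_additive_rare_switching_general a C hC hqa P hP c κ hκdef hκ
end
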